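/- Let X₁,...,X_N be independent almost surely positive random variables and X = X₁ + ... + X_N. Then the gamma smart path of X satisfies the distributional identity X_τ(X) = Σ_{i=1}^N [(1-τ)γ^i(α/N, λ) + τ Y^i(τ, X_i, λ)] in law, where γ^i(α/N, λ) are i.i.d. Gamma(α/N, λ) random variables and Y^i(τ,X_i,λ) are independent Poisson–gamma mixtures built from X_i, all independent of each other. -/

import Mathlib

open MeasureTheory ProbabilityTheory Real Set Filter Topology

noncomputable section

/-- Law of the Poisson–gamma mixture `Y(τ, X, λ)`: given `X = x`, draw
`K ~ Poisson(xλτ/(1-τ))`, then `Y ~ Gamma(K, λτ/(1-τ))` (`Y = 0` if `K = 0`). -/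
def mixtureLaw (lam τ : ℝ) (μX : Measure ℝ) : Measure ℝ :=
  μX.bind fun x =>
    (poissonMeasure (Real.toNNReal (x * lam * τ / (1 - τ)))).bind fun k =>
      if k = 0 then Measure.dirac 0 else gammaMeasure k (lam * τ / (1 - τ))

/-- Law of the gamma smart path `X_τ = (1-τ)·γ(α,λ) + τ·Y(τ,X,λ)`, where
`γ(α,λ)` is an independent Gamma(α,λ) random variable. -/
def smartLaw (α lam τ : ℝ) (μX : Measure ℝ) : Measure ℝ :=
  Measure.conv ((gammaMeasure α lam).map (fun y => (1 - τ) * y))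
    ((mixtureLaw lam τ μX).map (fun y => τ * y))

/-- Iterated additive convolution of a finite family of measures. -/
def convList {N : ℕ} (μ : Fin N → Measure ℝ) : Measure ℝ :=
  (List.ofFn μ).foldr (fun m acc => Measure.conv m acc) (Measure.dirac 0)

/-- Law of one summand `(1-τ)γⁱ(α/N, λ) + τ Yⁱ(τ, X_i, λ)` of the decomposition. -/
def summandLaw (α lam τ : ℝ) (N : ℕ) (μi : Measure ℝ) : Measure ℝ :=
  Measure.conv ((gammaMeasure (α / N) lam).map (fun y => (1 - τ) * y))
    ((mixtureLaw lam τ μi).map (fun y => τ * y))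

open scoped ENNReal

/-!
Every ingredient of the smart path turns convolution into convolution. Gamma laws with a common
rate convolve by adding shapes (the beta integral), so `γ(α)` is the sum of `N` independent
copies of `γ(α/N)`. Poisson laws convolve by adding means and Erlang laws by adding shapes, so
the compound-Poisson law of `Y(x + y)` is that of `Y(x) + Y(y)` whenever `x, y ≥ 0`; integrating
against the laws of the nonnegative `Xᵢ` gives that `Y(X₁ + ⋯ + X_N)` is the independent sum of
the `Y(Xᵢ)`. Scaling by `1 - τ` and `τ` commutes with convolution, and regrouping the independent
summands gives the identity.
-/

@[fun_prop]
lemma measurable_gammaPDF (a r : ℝ) : Measurable (gammaPDF a r) :=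
  (measurable_gammaPDFReal a r).ennreal_ofReal

@[fun_prop]
lemma measurable_betaPDF (a b : ℝ) : Measurable (betaPDF a b) :=
  (measurable_betaPDFReal a b).ennreal_ofReal

lemma gammaPDF_mul_gammaPDF_sub_mul {a b r z u : ℝ} (ha : 0 < a) (hb : 0 < b) (hr : 0 < r)
    (hz : 0 < z) (hu₀ : 0 < u) (hu₁ : u < 1) :
    gammaPDF a r (z * u) * gammaPDF b r (z - z * u)
      = ENNReal.ofReal z⁻¹ * gammaPDF (a + b) r z * betaPDF a b u := by
  have hΓa := Real.Gamma_pos_of_pos ha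
  have hΓb := Real.Gamma_pos_of_pos hb
  have hΓab := Real.Gamma_pos_of_pos (add_pos ha hb)
  have h1u : 0 < 1 - u := by linarith
  rw [gammaPDF_of_nonneg (by positivity), gammaPDF_of_nonneg (by nlinarith),
    gammaPDF_of_nonneg hz.le, betaPDF_of_pos_lt_one hu₀ hu₁, ← ENNReal.ofReal_mul (by positivity),
    ← ENNReal.ofReal_mul (by positivity), ← ENNReal.ofReal_mul (by positivity)]
  congr 1
  have hexp : rexp (-(r * (z * u))) * rexp (-(r * (z * (1 - u)))) = rexp (-(r * z)) := by
    rw [← exp_add]; ring_nf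
  rw [show z - z * u = z * (1 - u) by ring, mul_rpow hz.le hu₀.le, mul_rpow hz.le h1u.le,
    rpow_add hr, show a + b - 1 = (a - 1) + (b - 1) + 1 by ring, rpow_add hz, rpow_add hz,
    rpow_one, beta, ← hexp]
  field_simp

lemma lintegral_eq_mul_lintegral_comp_mul_left {c : ℝ} (hc : 0 < c) {h : ℝ → ℝ≥0∞}
    (hh : Measurable h) : ∫⁻ y, h y = ENNReal.ofReal c * ∫⁻ u, h (c * u) := by
  rw [← lintegral_map hh (measurable_const_mul c), Real.map_volume_mul_left hc.ne',
    lintegral_smul_measure, abs_of_pos (inv_pos.mpr hc), smul_eq_mul, ← mul_assoc,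
    ← ENNReal.ofReal_mul hc.le, mul_inv_cancel₀ hc.ne', ENNReal.ofReal_one, one_mul]

lemma lintegral_gammaPDF_mul_gammaPDF_sub_mul {a b r z : ℝ} (ha : 0 < a) (hb : 0 < b)
    (hr : 0 < r) (hz : 0 < z) :
    ∫⁻ u, gammaPDF a r (z * u) * gammaPDF b r (z - z * u)
      = ENNReal.ofReal z⁻¹ * gammaPDF (a + b) r z := by
  have hae : ∀ᵐ u, gammaPDF a r (z * u) * gammaPDF b r (z - z * u)
      = ENNReal.ofReal z⁻¹ * gammaPDF (a + b) r z * betaPDF a b u := by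
    filter_upwards [volume.ae_ne 0, volume.ae_ne 1] with u hu₀ hu₁
    rcases lt_or_gt_of_ne hu₀ with hneg | hpos
    · rw [gammaPDF_of_neg (mul_neg_of_pos_of_neg hz hneg), betaPDF_eq_zero_of_nonpos hneg.le,
        zero_mul, mul_zero]
    rcases lt_or_gt_of_ne hu₁ with hlt | hgt
    · exact gammaPDF_mul_gammaPDF_sub_mul ha hb hr hz hpos hlt
    · rw [gammaPDF_of_neg (show z - z * u < 0 by nlinarith), betaPDF_eq_zero_of_one_le hgt.le,
        mul_zero, mul_zero]
  rw [lintegral_congr_ae hae, lintegral_const_mul _ (measurable_betaPDF a b),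
    lintegral_betaPDF_eq_one ha hb, mul_one]

lemma lconvolution_gammaPDF_ae_eq {a b r : ℝ} (ha : 0 < a) (hb : 0 < b) (hr : 0 < r) :
    gammaPDF a r ⋆ₗ gammaPDF b r =ᵐ[volume] gammaPDF (a + b) r := by
  filter_upwards [volume.ae_ne 0] with z hz
  simp_rw [lconvolution_def, neg_add_eq_sub]
  rcases lt_or_gt_of_ne hz with hneg | hpos
  · have hzero (y : ℝ) : gammaPDF a r y * gammaPDF b r (z - y) = 0 := by
      rcases lt_or_ge y 0 with hy | hy
      · rw [gammaPDF_of_neg hy, zero_mul]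
      · rw [gammaPDF_of_neg (show z - y < 0 by linarith), mul_zero]
    simp only [hzero, lintegral_zero, gammaPDF_of_neg hneg]
  · rw [lintegral_eq_mul_lintegral_comp_mul_left hpos (by fun_prop),
      lintegral_gammaPDF_mul_gammaPDF_sub_mul ha hb hr hpos, ← mul_assoc,
      ← ENNReal.ofReal_mul hpos.le, mul_inv_cancel₀ hpos.ne', ENNReal.ofReal_one, one_mul]

theorem gammaMeasure_conv_gammaMeasure {a b r : ℝ} (ha : 0 < a) (hb : 0 < b) (hr : 0 < r) :
    gammaMeasure a r ∗ gammaMeasure b r = gammaMeasure (a + b) r := by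
  rw [gammaMeasure, gammaMeasure, conv_withDensity_eq_lconvolution (measurable_gammaPDF a r)
    (measurable_gammaPDF b r), withDensity_congr_ae (lconvolution_gammaPDF_ae_eq ha hb hr),
    gammaMeasure]

namespace MeasureTheory.Measure

variable {α β γ δ : Type*} {mα : MeasurableSpace α} {mβ : MeasurableSpace β}
  {mγ : MeasurableSpace γ} {mδ : MeasurableSpace δ}

lemma prod_comp_prod (μ : Measure α) (ν : Measure γ) [SFinite μ] [SFinite ν]
    (κ : Kernel α β) (η : Kernel γ δ) [IsSFiniteKernel κ] [IsSFiniteKernel η] :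
    (κ ∘ₘ μ).prod (η ∘ₘ ν) = (κ ∥ₖ η) ∘ₘ μ.prod ν := by
  rw [prod_comp_right, prod_comp_left, comp_assoc, Kernel.parallelComp_comp_parallelComp,
    Kernel.id_comp, Kernel.comp_id]

lemma comp_map_eq_bind (μ : Measure α) (κ : Kernel β γ) {f : α → β} (hf : Measurable f) :
    κ ∘ₘ μ.map f = μ.bind (fun a => κ (f a)) := by
  rw [bind, bind, map_map κ.measurable hf]
  rfl

variable {M N : Type*} [AddMonoid M] [AddMonoid N] {mM : MeasurableSpace M}
  {mN : MeasurableSpace N} [MeasurableAdd₂ M] [MeasurableAdd₂ N]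

theorem comp_conv_of_ae_add (κ : Kernel M N) [IsSFiniteKernel κ] {μ ν : Measure M}
    [SFinite μ] [SFinite ν] (h : ∀ᵐ p ∂μ.prod ν, κ (p.1 + p.2) = κ p.1 ∗ κ p.2) :
    κ ∘ₘ (μ ∗ ν) = (κ ∘ₘ μ) ∗ (κ ∘ₘ ν) := by
  calc κ ∘ₘ (μ ∗ ν) = (μ.prod ν).bind fun p => κ (p.1 + p.2) :=
        comp_map_eq_bind _ _ measurable_add
    _ = ((κ ∥ₖ κ).map fun q : N × N => q.1 + q.2) ∘ₘ μ.prod ν := by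
        refine bind_congr_right (h.mono fun p hp => ?_)
        rw [Kernel.map_apply _ measurable_add, Kernel.parallelComp_apply]
        exact hp
    _ = (κ ∘ₘ μ) ∗ (κ ∘ₘ ν) := by
        rw [← map_comp _ _ measurable_add, ← prod_comp_prod]
        rfl

end MeasureTheory.Measure

lemma measurable_poissonMeasure : Measurable poissonMeasure := by
  refine Measure.measurable_of_measurable_coe _ fun s hs => ?_
  simp only [poissonMeasure, Measure.sum_apply _ hs, Measure.smul_apply, smul_eq_mul]
  exact Measurable.tsum fun n => by fun_prop

lemma poissonMeasure_zero : poissonMeasure 0 = Measure.dirac 0 := by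
  refine Measure.ext_of_singleton fun n => ?_
  rcases Nat.eq_zero_or_pos n with rfl | hn
  · simp [poissonMeasure_singleton]
  · simp [poissonMeasure_singleton, zero_pow hn.ne', hn.ne]

/-- `Gamma(k, θ)`, with `δ₀` at `k = 0`: `gammaMeasure 0 θ` is the zero measure since `Γ(0) = 0`. -/
def erlangMeasure (θ : ℝ) (k : ℕ) : Measure ℝ :=
  if k = 0 then Measure.dirac 0 else gammaMeasure k θ

lemma erlangMeasure_zero (θ : ℝ) : erlangMeasure θ 0 = Measure.dirac 0 := if_pos rfl

lemma isProbabilityMeasure_erlangMeasure {θ : ℝ} (hθ : 0 < θ) (k : ℕ) :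
    IsProbabilityMeasure (erlangMeasure θ k) := by
  unfold erlangMeasure
  split_ifs with hk
  · infer_instance
  · exact isProbabilityMeasure_gammaMeasure (by positivity) hθ

lemma erlangMeasure_add {θ : ℝ} (hθ : 0 < θ) (k l : ℕ) :
    erlangMeasure θ (k + l) = erlangMeasure θ k ∗ erlangMeasure θ l := by
  have := isProbabilityMeasure_erlangMeasure hθ
  rcases Nat.eq_zero_or_pos k with rfl | hk
  · rw [zero_add, erlangMeasure_zero, Measure.dirac_zero_conv]
  rcases Nat.eq_zero_or_pos l with rfl | hl
  · rw [add_zero, erlangMeasure_zero, Measure.conv_dirac_zero]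
  simp only [erlangMeasure, hk.ne', hl.ne', (Nat.add_pos_left hk l).ne', if_false]
  rw [gammaMeasure_conv_gammaMeasure (by positivity) (by positivity) hθ, Nat.cast_add]

def erlangKernel (θ : ℝ) : Kernel ℕ ℝ := ⟨erlangMeasure θ, measurable_from_nat⟩

def poissonGammaKernel (θ : ℝ) : Kernel ℝ ℝ where
  toFun x := erlangKernel θ ∘ₘ poissonMeasure (x * θ).toNNReal
  measurable' := (Measure.measurable_bind' (erlangKernel θ).measurable).comp
    (measurable_poissonMeasure.comp (by fun_prop))

lemma poissonGammaKernel_apply (θ x : ℝ) :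
    poissonGammaKernel θ x = erlangKernel θ ∘ₘ poissonMeasure (x * θ).toNNReal := rfl

lemma isMarkovKernel_poissonGammaKernel {θ : ℝ} (hθ : 0 < θ) :
    IsMarkovKernel (poissonGammaKernel θ) := by
  have : IsMarkovKernel (erlangKernel θ) := ⟨isProbabilityMeasure_erlangMeasure hθ⟩
  exact ⟨fun x => by rw [poissonGammaKernel_apply]; infer_instance⟩

lemma poissonGammaKernel_zero (θ : ℝ) : poissonGammaKernel θ 0 = Measure.dirac 0 := by
  rw [poissonGammaKernel_apply, zero_mul, Real.toNNReal_zero, poissonMeasure_zero,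
    Measure.dirac_bind (erlangKernel θ).measurable]
  rfl

lemma poissonGammaKernel_add {θ x y : ℝ} (hθ : 0 < θ) (hx : 0 ≤ x) (hy : 0 ≤ y) :
    poissonGammaKernel θ (x + y) = poissonGammaKernel θ x ∗ poissonGammaKernel θ y := by
  have : IsMarkovKernel (erlangKernel θ) := ⟨isProbabilityMeasure_erlangMeasure hθ⟩
  rw [poissonGammaKernel_apply, add_mul, Real.toNNReal_add (by positivity) (by positivity),
    ← poissonMeasure_conv_poissonMeasure]
  exact Measure.comp_conv_of_ae_add (erlangKernel θ)
    (ae_of_all _ fun p => erlangMeasure_add hθ p.1 p.2)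

lemma mixtureLaw_eq (lam τ : ℝ) (μX : Measure ℝ) :
    mixtureLaw lam τ μX = poissonGammaKernel (lam * τ / (1 - τ)) ∘ₘ μX := by
  unfold mixtureLaw
  congr 1
  funext x
  rw [show x * lam * τ / (1 - τ) = x * (lam * τ / (1 - τ)) by ring]
  rfl

lemma convList_zero (μ : Fin 0 → Measure ℝ) : convList μ = Measure.dirac 0 := rfl

lemma convList_succ {n : ℕ} (μ : Fin (n + 1) → Measure ℝ) :
    convList μ = μ 0 ∗ convList fun i => μ i.succ := by
  rw [convList, List.ofFn_succ, List.foldr_cons]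
  rfl

lemma convList_mem (S : Set (Measure ℝ)) (h₀ : Measure.dirac 0 ∈ S)
    (hS : ∀ a ∈ S, ∀ b ∈ S, a ∗ b ∈ S) {N : ℕ} (μ : Fin N → Measure ℝ) (hμ : ∀ i, μ i ∈ S) :
    convList μ ∈ S := by
  induction N with
  | zero => exact h₀
  | succ n ih => rw [convList_succ]; exact hS _ (hμ 0) _ (ih _ fun i => hμ i.succ)

theorem map_convList (F : Measure ℝ → Measure ℝ) (S : Set (Measure ℝ))
    (h₀ : Measure.dirac 0 ∈ S) (hS : ∀ a ∈ S, ∀ b ∈ S, a ∗ b ∈ S)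
    (hF₀ : F (Measure.dirac 0) = Measure.dirac 0) (hF : ∀ a ∈ S, ∀ b ∈ S, F (a ∗ b) = F a ∗ F b)
    {N : ℕ} (μ : Fin N → Measure ℝ) (hμ : ∀ i, μ i ∈ S) :
    F (convList μ) = convList fun i => F (μ i) := by
  induction N with
  | zero => exact hF₀
  | succ n ih =>
    rw [convList_succ, convList_succ, hF _ (hμ 0) _ (convList_mem S h₀ hS _ fun i => hμ i.succ),
      ih _ fun i => hμ i.succ]

lemma sFinite_convList {N : ℕ} (μ : Fin N → Measure ℝ) [∀ i, SFinite (μ i)] :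
    SFinite (convList μ) :=
  convList_mem {m | SFinite m} (by dsimp; infer_instance)
    (fun a ha b hb => by dsimp at ha hb ⊢; infer_instance) μ fun i => by dsimp; infer_instance

lemma conv_conv_conv_comm (a b c d : Measure ℝ) [SFinite a] [SFinite b] [SFinite c]
    [SFinite d] : (a ∗ b) ∗ (c ∗ d) = (a ∗ c) ∗ (b ∗ d) := by
  rw [Measure.conv_assoc, Measure.conv_assoc, ← Measure.conv_assoc b, Measure.conv_comm b c,
    Measure.conv_assoc c]

theorem convList_conv {N : ℕ} (μ ν : Fin N → Measure ℝ) [∀ i, SFinite (μ i)]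
    [∀ i, SFinite (ν i)] :
    (convList fun i => μ i ∗ ν i) = convList μ ∗ convList ν := by
  induction N with
  | zero => exact (Measure.conv_dirac_zero (Measure.dirac 0)).symm
  | succ n ih =>
    have := sFinite_convList fun i => μ i.succ
    have := sFinite_convList fun i => ν i.succ
    rw [convList_succ, convList_succ μ, convList_succ ν, ih, conv_conv_conv_comm]

theorem map_mul_convList (c : ℝ) {N : ℕ} (μ : Fin N → Measure ℝ) [∀ i, SFinite (μ i)] :
    (convList μ).map (c * ·) = convList fun i => (μ i).map (c * ·) := by
  refine map_convList _ {m | SFinite m} (by dsimp; infer_instance)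
    (fun a ha b hb => by dsimp at ha hb ⊢; infer_instance) ?_ (fun a ha b hb => ?_) μ
    fun i => by dsimp; infer_instance
  · simp [Measure.map_dirac' (measurable_const_mul c)]
  · dsimp at ha hb
    simpa using Measure.map_conv_addMonoidHom (μ := a) (ν := b) (AddMonoidHom.mulLeft c)
      (measurable_const_mul c)

theorem convList_gammaMeasure {a r : ℝ} (ha : 0 < a) (hr : 0 < r) {N : ℕ} (hN : 0 < N) :
    (convList fun _ : Fin N => gammaMeasure a r) = gammaMeasure (N * a) r := by
  have := isProbabilityMeasure_gammaMeasure ha hr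
  induction N with
  | zero => exact absurd hN (lt_irrefl 0)
  | succ n ih =>
    rw [convList_succ]
    rcases Nat.eq_zero_or_pos n with rfl | hn
    · simp [convList_zero]
    · rw [ih hn, gammaMeasure_conv_gammaMeasure ha (by positivity) hr]
      congr 1
      push_cast
      ring

lemma ae_prod_nonneg {μ ν : Measure ℝ} (hμ : ∀ᵐ x ∂μ, 0 ≤ x) (hν : ∀ᵐ x ∂ν, 0 ≤ x) :
    ∀ᵐ p ∂μ.prod ν, 0 ≤ p.1 ∧ 0 ≤ p.2 :=
  (Measure.quasiMeasurePreserving_fst.ae hμ).and (Measure.quasiMeasurePreserving_snd.ae hν)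

lemma ae_nonneg_conv {μ ν : Measure ℝ} (hμ : ∀ᵐ x ∂μ, 0 ≤ x) (hν : ∀ᵐ x ∂ν, 0 ≤ x) :
    ∀ᵐ x ∂(μ ∗ ν), 0 ≤ x := by
  rw [Measure.conv, ae_map_iff measurable_add.aemeasurable measurableSet_Ici]
  exact (ae_prod_nonneg hμ hν).mono fun _ hp => add_nonneg hp.1 hp.2

lemma poissonGammaKernel_comp_conv {θ : ℝ} (hθ : 0 < θ) {μ ν : Measure ℝ} [SFinite μ]
    [SFinite ν] (hμ : ∀ᵐ x ∂μ, 0 ≤ x) (hν : ∀ᵐ x ∂ν, 0 ≤ x) :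
    poissonGammaKernel θ ∘ₘ (μ ∗ ν)
      = (poissonGammaKernel θ ∘ₘ μ) ∗ (poissonGammaKernel θ ∘ₘ ν) := by
  have := isMarkovKernel_poissonGammaKernel hθ
  exact Measure.comp_conv_of_ae_add _
    ((ae_prod_nonneg hμ hν).mono fun _ hp => poissonGammaKernel_add hθ hp.1 hp.2)

theorem poissonGammaKernel_comp_convList {θ : ℝ} (hθ : 0 < θ) {N : ℕ} (μ : Fin N → Measure ℝ)
    [∀ i, SFinite (μ i)] (hμ : ∀ i, ∀ᵐ x ∂μ i, 0 ≤ x) :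
    poissonGammaKernel θ ∘ₘ convList μ = convList fun i => poissonGammaKernel θ ∘ₘ μ i := by
  let S : Set (Measure ℝ) := {m | SFinite m ∧ ∀ᵐ x ∂m, 0 ≤ x}
  have h₀ : Measure.dirac 0 ∈ S := ⟨inferInstance, (ae_dirac_iff measurableSet_Ici).mpr le_rfl⟩
  have hS : ∀ a ∈ S, ∀ b ∈ S, a ∗ b ∈ S := fun a ⟨_, ha⟩ b ⟨_, hb⟩ =>
    ⟨inferInstance, ae_nonneg_conv ha hb⟩
  refine map_convList (poissonGammaKernel θ ∘ₘ ·) S h₀ hS ?_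
    (fun a ⟨_, ha⟩ b ⟨_, hb⟩ => poissonGammaKernel_comp_conv hθ ha hb) μ
    fun i => ⟨inferInstance, hμ i⟩
  rw [Measure.dirac_bind (poissonGammaKernel θ).measurable, poissonGammaKernel_zero]

/-- Smart path of an independent sum: `X_τ(X₁ + ⋯ + X_N)` has the same law as
`Σᵢ [(1-τ)γⁱ(α/N,λ) + τ Yⁱ(τ,X_i,λ)]` with all ingredients independent. -/
theorem smartLaw_conv (α lam τ : ℝ) (hα : 0 < α) (hlam : 0 < lam)
    (hτ : τ ∈ Ioo (0:ℝ) 1) (N : ℕ) (hN : 0 < N) (μ : Fin N → Measure ℝ)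
    (hprob : ∀ i, IsProbabilityMeasure (μ i)) (hpos : ∀ i, μ i (Iic 0) = 0) :
    smartLaw α lam τ (convList μ) = convList (fun i => summandLaw α lam τ N (μ i)) := by
  have hθ : 0 < lam * τ / (1 - τ) := div_pos (mul_pos hlam hτ.1) (sub_pos.mpr hτ.2)
  have hαN : 0 < α / N := div_pos hα (Nat.cast_pos.mpr hN)
  have := isProbabilityMeasure_gammaMeasure hαN hlam
  have := isMarkovKernel_poissonGammaKernel hθ
  have hnonneg (i : Fin N) : ∀ᵐ x ∂μ i, 0 ≤ x :=
    measure_mono_null (fun x (hx : ¬0 ≤ x) => (not_le.mp hx).le) (hpos i)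
  have hgamma : gammaMeasure α lam = convList fun _ : Fin N => gammaMeasure (α / N) lam := by
    rw [convList_gammaMeasure hαN hlam hN, mul_div_cancel₀ _ (Nat.cast_ne_zero.mpr hN.ne')]
  simp only [smartLaw, summandLaw, mixtureLaw_eq]
  rw [convList_conv, hgamma, poissonGammaKernel_comp_convList hθ μ hnonneg, map_mul_convList,
    map_mul_convList]
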